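/- arXiv:2604.04119 — 2 statements merged into one kernel-verified Lean document; each statement's English description precedes it below -/
import Mathlib

section
/- Let A, B, C be three points in ℝ², and let S be a point such that the three unit vectors from S toward A, B, C sum to zero (the 120° condition), with S distinct from A, B, C. Then S is a critical point, and in fact a global minimizer, of the function h(x) = dist(x,A) + dist(x,B) + dist(x,C) (S is the Fermat point). -/
local notation "E" => EuclideanSpace ℝ (Fin 2)

/-!
Each `x ↦ dist x P` is convex, with the negated unit vector from `S` toward `P` as a subgradient
at `S`. Summing the three supporting-hyperplane inequalities for `P = A, B, C`, the 120° condition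
cancels the linear terms.
-/

open RealInnerProductSpace

section SupportingHyperplane

variable {F : Type*} [NormedAddCommGroup F] [InnerProductSpace ℝ F]

/-- The junk value `0⁻¹ = 0` makes this hold also for `S = P`, with zero subgradient. -/
lemma dist_sub_inner_unit_le_dist (P S x : F) :
    dist S P - ⟪‖P - S‖⁻¹ • (P - S), x - S⟫ ≤ dist x P := by
  set u := ‖P - S‖⁻¹ • (P - S) with hu_def
  have hself : ⟪u, P - S⟫ = ‖P - S‖ := by
    rw [hu_def, real_inner_smul_left, real_inner_self_eq_norm_mul_norm, ← mul_assoc,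
      inv_mul_mul_self]
  have hu : ‖u‖ ≤ 1 := by
    rw [norm_smul, norm_inv, norm_norm]
    exact inv_mul_le_one
  calc dist S P - ⟪u, x - S⟫
      = ⟪u, P - x⟫ := by
        rw [show P - x = (P - S) - (x - S) by abel, inner_sub_right u (P - S), hself, dist_comm,
          dist_eq_norm]
    _ ≤ ‖u‖ * ‖P - x‖ := real_inner_le_norm _ _
    _ ≤ dist x P := by
        rw [dist_comm, dist_eq_norm]
        exact mul_le_of_le_one_left (norm_nonneg _) hu

end SupportingHyperplane

theorem fermat_point_of_tangent_sum_zero_general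
    (A B C S : E)
    (h120 : (‖A - S‖)⁻¹ • (A - S) + (‖B - S‖)⁻¹ • (B - S) + (‖C - S‖)⁻¹ • (C - S) = 0) :
    ∀ x : E, dist S A + dist S B + dist S C ≤ dist x A + dist x B + dist x C := by
  intro x
  have hlinear : ⟪(‖A - S‖)⁻¹ • (A - S), x - S⟫ + ⟪(‖B - S‖)⁻¹ • (B - S), x - S⟫
      + ⟪(‖C - S‖)⁻¹ • (C - S), x - S⟫ = 0 := by
    rw [← inner_add_left, ← inner_add_left, h120, inner_zero_left]
  linarith [dist_sub_inner_unit_le_dist A S x, dist_sub_inner_unit_le_dist B S x,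
    dist_sub_inner_unit_le_dist C S x]

/-- If the unit vectors from `S` toward `A`, `B`, `C` sum to zero (the 120° condition),
then `S` is a global minimizer of `h(x) = dist x A + dist x B + dist x C`,
i.e. `S` is the Fermat point (in particular a critical point of `h`). -/
theorem fermat_point_of_tangent_sum_zero
    (A B C S : E) (hA : S ≠ A) (hB : S ≠ B) (hC : S ≠ C)
    (h120 : (‖A - S‖)⁻¹ • (A - S) + (‖B - S‖)⁻¹ • (B - S) + (‖C - S‖)⁻¹ • (C - S) = 0) :
    ∀ x : E, dist S A + dist S B + dist S C ≤ dist x A + dist x B + dist x C :=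
  fermat_point_of_tangent_sum_zero_general A B C S h120
end

section
/- The function h(x) = dist(x,A) + dist(x,B) + dist(x,C) on ℝ² is convex and 3-Lipschitz, and if it attains a local minimum at a point S distinct from A, B, C, then the sum of the unit vectors from S to A, B, C equals zero. -/
/-!
Convexity and the Lipschitz bound hold termwise. Away from `a`, `x ↦ dist x a` is differentiable
with gradient the unit vector `(x - a) / ‖x - a‖`, so at a local minimum away from the three points
Fermat's rule makes the sum of these gradients, the negated sum of the unit vectors towards
`A, B, C`, vanish.
-/

local notation "E" => EuclideanSpace ℝ (Fin 2)

section InnerProductSpace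

variable {F : Type*} [NormedAddCommGroup F] [InnerProductSpace ℝ F]

theorem hasFDerivAt_norm_of_ne_zero {x : F} (hx : x ≠ 0) :
    HasFDerivAt (‖·‖) (innerSL ℝ (‖x‖⁻¹ • x)) x := by
  have hsqrt := (hasStrictFDerivAt_norm_sq x).hasFDerivAt.sqrt (by positivity)
  simp only [Real.sqrt_sq (norm_nonneg _)] at hsqrt
  refine hsqrt.congr_fderiv ?_
  ext v
  simp
  field_simp

theorem hasFDerivAt_dist_left (a : F) {x : F} (hx : x ≠ a) :
    HasFDerivAt (dist · a) (innerSL ℝ (‖x - a‖⁻¹ • (x - a))) x := by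
  simpa [dist_eq_norm, Function.comp_def] using
    (hasFDerivAt_norm_of_ne_zero (sub_ne_zero.mpr hx)).comp x ((hasFDerivAt_id x).sub_const a)

theorem IsLocalMin.sum_unit_vectors_eq_zero {ι : Type*} (s : Finset ι) (P : ι → F) {S : F}
    (hS : ∀ i ∈ s, S ≠ P i) (hmin : IsLocalMin (fun x => ∑ i ∈ s, dist x (P i)) S) :
    ∑ i ∈ s, ‖P i - S‖⁻¹ • (P i - S) = 0 := by
  have hderiv : HasFDerivAt (fun x => ∑ i ∈ s, dist x (P i))
      (innerSL ℝ (∑ i ∈ s, ‖S - P i‖⁻¹ • (S - P i))) S := by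
    rw [map_sum]
    exact HasFDerivAt.fun_sum fun i hi => hasFDerivAt_dist_left (P i) (hS i hi)
  have hgrad : ∑ i ∈ s, ‖S - P i‖⁻¹ • (S - P i) = 0 := by
    have := congrArg norm (hmin.hasFDerivAt_eq_zero hderiv)
    rwa [innerSL_apply_norm, norm_zero, norm_eq_zero] at this
  calc ∑ i ∈ s, ‖P i - S‖⁻¹ • (P i - S) = -∑ i ∈ s, ‖S - P i‖⁻¹ • (S - P i) := by
        simp only [← Finset.sum_neg_distrib, ← smul_neg, neg_sub, norm_sub_rev]
    _ = 0 := by rw [hgrad, neg_zero]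

end InnerProductSpace

/-- `h(x) = dist x A + dist x B + dist x C` is convex and 3-Lipschitz, and if it has a
local minimum at `S` distinct from `A, B, C`, then the unit vectors from `S` to
`A, B, C` sum to zero. -/
theorem distance_sum_convex_lipschitz_and_critical
    (A B C : E) :
    ConvexOn ℝ Set.univ (fun x : E => dist x A + dist x B + dist x C) ∧
    LipschitzWith 3 (fun x : E => dist x A + dist x B + dist x C) ∧
    (∀ S : E, S ≠ A → S ≠ B → S ≠ C →
      IsLocalMin (fun x : E => dist x A + dist x B + dist x C) S →
      (‖A - S‖)⁻¹ • (A - S) + (‖B - S‖)⁻¹ • (B - S) + (‖C - S‖)⁻¹ • (C - S) = 0) := by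
  refine ⟨((convexOn_univ_dist A).add (convexOn_univ_dist B)).add (convexOn_univ_dist C), ?_, ?_⟩
  · exact (((LipschitzWith.dist_left A).add (LipschitzWith.dist_left B)).add
      (LipschitzWith.dist_left C)).weaken (by norm_num)
  · intro S hA hB hC hmin
    have hS : ∀ i ∈ Finset.univ, S ≠ ![A, B, C] i := by
      simp [Fin.forall_fin_succ, hA, hB, hC]
    simpa [Fin.sum_univ_three] using
      IsLocalMin.sum_unit_vectors_eq_zero Finset.univ ![A, B, C] hS
        (by simpa [Fin.sum_univ_three] using hmin)
end
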